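/- arXiv:1401.6755 — 2 statements merged into one kernel-verified Lean document; each statement's English description precedes it below -/
import Mathlib

section
/- Let G be a finite group whose power graph P(G) is C_4-free, and let x ∈ G be an element of order p^m q, where p, q are distinct primes and m > 1. Then for any Sylow p-subgroup P of C_G(x), the Hughes subgroup H_p(P) is a cyclic subgroup that is normal in C_G(x), and every Sylow q-subgroup of C_G(x) has exponent q. -/
/-- Adjacency in the power graph of a group: two distinct elements are adjacent
iff one is a power of the other. -/
def pgAdj {G : Type*} [Group G] (x y : G) : Prop :=
  x ≠ y ∧ (x ∈ Subgroup.zpowers y ∨ y ∈ Subgroup.zpowers x)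

/-- The power graph contains an induced 4-cycle. -/
def pgHasInducedC4 (G : Type*) [Group G] : Prop :=
  ∃ x u y v : G,
    x ≠ u ∧ x ≠ y ∧ x ≠ v ∧ u ≠ y ∧ u ≠ v ∧ y ≠ v ∧
    pgAdj x u ∧ pgAdj u y ∧ pgAdj y v ∧ pgAdj v x ∧
    ¬ pgAdj x y ∧ ¬ pgAdj u v

/-- The power graph is `C₄`-free. -/
def pgC4Free (G : Type*) [Group G] : Prop := ¬ pgHasInducedC4 G

/-- The Hughes subgroup of `H` with respect to the prime `p`: the subgroup
generated by all elements whose order is different from `p`. -/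
def hughesSubgroup (p : ℕ) (H : Type*) [Group H] : Subgroup H :=
  Subgroup.closure {h : H | orderOf h ≠ p}

/-!
The hypothesis on `P(G)` is used through two induced 4-cycles. If `g` and `h` commute with an
element `b` of coprime order and share a power `u` incomparable with `b`, then
`g * b, u, h * b, b` is an induced 4-cycle unless one of `g, h` is a power of the other; and an
element `c` of order `p²q²` gives the induced 4-cycle `c ^ q, c ^ (p * q²), c ^ p, c ^ (p² * q)`.

In `C_G(x)` take `b = x ^ p ^ m`. The first cycle, applied to `w * a` and `a = x ^ q` for `w` of
order `p`, puts every element of order `p` into `⟨x ^ q⟩`; so the subgroup of order `p` of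
`⟨x ^ q⟩` is a common power of all nontrivial `p`-elements, and the first cycle again makes the
`p`-elements a chain for `g ∈ ⟨h⟩`. Hence a Sylow `p`-subgroup is cyclic and contains every
`p`-element, so it is normal; it contains `x ^ q` of order `p ^ m > p`, so it is its own Hughes
subgroup. The second cycle, applied to `x ^ (p ^ (m - 2) * q) * y`, rules out elements `y` of
order `q²`, so Sylow `q`-subgroups have exponent `q`.
-/

open Subgroup

section Group

variable {G : Type*} [Group G]

def PowComparable (x y : G) : Prop := x ∈ zpowers y ∨ y ∈ zpowers x

theorem PowComparable.refl (x : G) : PowComparable x x := Or.inl (mem_zpowers x)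

theorem PowComparable.symm {x y : G} (h : PowComparable x y) : PowComparable y x := Or.symm h

theorem powComparable_map_iff {H : Type*} [Group H] {f : H →* G} (hf : Function.Injective f)
    {x y : H} : PowComparable (f x) (f y) ↔ PowComparable x y := by
  simp only [PowComparable, ← MonoidHom.map_zpowers, mem_map_iff_mem hf]

theorem not_powComparable_of_coprime {x y : G} (hco : (orderOf x).Coprime (orderOf y))
    (hx : orderOf x ≠ 1) (hy : orderOf y ≠ 1) : ¬ PowComparable x y := by
  rintro (h | h)
  · exact hx (hco.eq_one_of_dvd (orderOf_dvd_of_mem_zpowers h))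
  · exact hy (hco.symm.eq_one_of_dvd (orderOf_dvd_of_mem_zpowers h))

/-- Incomparability of opposite vertices already forces the four vertices to be distinct. -/
theorem pgHasInducedC4_of_powComparable {x u y v : G} (hxu : PowComparable x u)
    (huy : PowComparable u y) (hyv : PowComparable y v) (hvx : PowComparable v x)
    (hxy : ¬ PowComparable x y) (huv : ¬ PowComparable u v) : pgHasInducedC4 G := by
  have ne_of : ∀ {a b : G}, ¬ PowComparable a b → a ≠ b := fun h e => h (e ▸ .refl _)
  have hxu' : x ≠ u := by rintro rfl; exact hxy huy
  have huy' : u ≠ y := by rintro rfl; exact hxy hxu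
  have hyv' : y ≠ v := by rintro rfl; exact hxy hvx.symm
  have hvx' : x ≠ v := by rintro rfl; exact hxy hyv.symm
  exact ⟨x, u, y, v, hxu', ne_of hxy, hvx', huy', ne_of huv, hyv', ⟨hxu', hxu⟩, ⟨huy', huy⟩,
    ⟨hyv', hyv⟩, ⟨hvx'.symm, hvx⟩, fun h => hxy h.2, fun h => huv h.2⟩

theorem pgC4Free.of_injective {H : Type*} [Group H] (h : pgC4Free G) (f : H →* G)
    (hf : Function.Injective f) : pgC4Free H := by
  rintro ⟨x, u, y, v, -, hxy, -, -, huv, -, hxu, huy, hyv, hvx, nxy, nuv⟩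
  exact h (pgHasInducedC4_of_powComparable ((powComparable_map_iff hf).mpr hxu.2)
    ((powComparable_map_iff hf).mpr huy.2) ((powComparable_map_iff hf).mpr hyv.2)
    ((powComparable_map_iff hf).mpr hvx.2)
    (fun hc => nxy ⟨hxy, (powComparable_map_iff hf).mp hc⟩)
    (fun hc => nuv ⟨huv, (powComparable_map_iff hf).mp hc⟩))

theorem orderOf_pow_of_orderOf_eq_mul {x : G} {a b : ℕ}
    (hx : orderOf x = a * b) (ha : a ≠ 0) : orderOf (x ^ a) = b := by
  rw [orderOf_pow_of_dvd ha (hx ▸ dvd_mul_right a b), hx, Nat.mul_div_cancel_left b ha.bot_lt]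

theorem mem_zpowers_mul_left_of_coprime {a b : G} (hab : Commute a b)
    (hco : (orderOf a).Coprime (orderOf b)) : a ∈ zpowers (a * b) := by
  have ha : a ∈ zpowers (a ^ orderOf b) := mem_zpowers_pow_iff.mpr hco.symm
  have hpow : (a * b) ^ orderOf b = a ^ orderOf b := by
    rw [hab.mul_pow, pow_orderOf_eq_one, mul_one]
  exact zpowers_le.mpr (hpow ▸ pow_mem (mem_zpowers _) _) ha

theorem mem_zpowers_mul_right_of_coprime {a b : G} (hab : Commute a b)
    (hco : (orderOf a).Coprime (orderOf b)) : b ∈ zpowers (a * b) :=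
  hab.eq ▸ mem_zpowers_mul_left_of_coprime hab.symm hco.symm

theorem mem_zpowers_of_mul_mem_zpowers_mul {g h b : G} (hhb : Commute h b)
    (hg : (orderOf g).Coprime (orderOf b)) (hh : (orderOf h).Coprime (orderOf b))
    (hmem : g * b ∈ zpowers (h * b)) : g ∈ zpowers h := by
  obtain ⟨n, hn⟩ := mem_zpowers_iff.mp hmem
  have hg_eq : g = h ^ n * b ^ (n - 1) := by
    rw [zpow_sub_one, ← mul_assoc, ← hhb.mul_zpow, hn, mul_inv_cancel_right]
  have hc_dvd : orderOf (b ^ (n - 1)) ∣ orderOf b :=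
    orderOf_dvd_of_mem_zpowers (zpow_mem (mem_zpowers b) _)
  have hco : (orderOf (h ^ n)).Coprime (orderOf (b ^ (n - 1))) :=
    Nat.Coprime.coprime_dvd_right hc_dvd
      (hh.coprime_dvd_left (orderOf_dvd_of_mem_zpowers (zpow_mem (mem_zpowers h) _)))
  -- the `b`-part of `g` is a power of `g`, so its order divides two coprime numbers
  have hc_mem : b ^ (n - 1) ∈ zpowers g :=
    hg_eq ▸ mem_zpowers_mul_right_of_coprime ((hhb.zpow_zpow n (n - 1))) hco
  have hc : b ^ (n - 1) = 1 := orderOf_eq_one_iff.mp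
    (Nat.eq_one_of_dvd_coprimes hg (orderOf_dvd_of_mem_zpowers hc_mem) hc_dvd)
  rw [hg_eq, hc, mul_one]
  exact zpow_mem (mem_zpowers h) n

/-- The induced 4-cycle `g * b, u, h * b, b`. -/
theorem powComparable_of_mem_zpowers_of_commute (h4 : pgC4Free G) {g h b u : G}
    (hgb : Commute g b) (hhb : Commute h b) (hg : (orderOf g).Coprime (orderOf b))
    (hh : (orderOf h).Coprime (orderOf b)) (hug : u ∈ zpowers g) (huh : u ∈ zpowers h)
    (hub : ¬ PowComparable u b) : PowComparable g h := by
  by_contra hgh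
  refine h4 (pgHasInducedC4_of_powComparable (x := g * b) (y := h * b) (v := b)
    (Or.inr (zpowers_le.mpr (mem_zpowers_mul_left_of_coprime hgb hg) hug))
    (Or.inl (zpowers_le.mpr (mem_zpowers_mul_left_of_coprime hhb hh) huh))
    (Or.inr (mem_zpowers_mul_right_of_coprime hhb hh))
    (Or.inl (mem_zpowers_mul_right_of_coprime hgb hg)) ?_ hub)
  rintro (hm | hm)
  · exact hgh (Or.inl (mem_zpowers_of_mul_mem_zpowers_mul hhb hg hh hm))
  · exact hgh (Or.inr (mem_zpowers_of_mul_mem_zpowers_mul hgb hh hg hm))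

theorem pgHasInducedC4_of_orderOf_eq_sq_mul_sq {p q : ℕ} (hp : p.Prime) (hq : q.Prime)
    (hpq : p ≠ q) {c : G} (hc : orderOf c = p ^ 2 * q ^ 2) : pgHasInducedC4 G := by
  have hcop : p.Coprime q := (Nat.coprime_primes hp hq).mpr hpq
  have mem : ∀ {d e : ℕ}, d ∣ e → c ^ e ∈ zpowers (c ^ d) := by
    rintro d _ ⟨k, rfl⟩
    rw [pow_mul]
    exact pow_mem (mem_zpowers _) k
  have ord : ∀ {d e : ℕ}, d * e = p ^ 2 * q ^ 2 → orderOf (c ^ d) = e := fun {d e} hde => by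
    have hd : d ≠ 0 := by rintro rfl; simp [hp.ne_zero, hq.ne_zero] at hde
    rw [orderOf_pow_of_dvd hd (hc ▸ ⟨e, hde.symm⟩), hc, ← hde,
      Nat.mul_div_cancel_left _ hd.bot_lt]
  have h1 := ord (d := q) (e := p ^ 2 * q) (by ring)
  have h2 := ord (d := p) (e := p * q ^ 2) (by ring)
  have h3 := ord (d := p * q ^ 2) (e := p) (by ring)
  have h4 := ord (d := p ^ 2 * q) (e := q) (by ring)
  refine pgHasInducedC4_of_powComparable (x := c ^ q) (u := c ^ (p * q ^ 2)) (y := c ^ p)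
    (v := c ^ (p ^ 2 * q)) (Or.inr (mem ⟨p * q, by ring⟩)) (Or.inl (mem ⟨q ^ 2, by ring⟩))
    (Or.inr (mem ⟨p * q, by ring⟩)) (Or.inl (mem ⟨p ^ 2, by ring⟩)) ?_
    (not_powComparable_of_coprime (by rw [h3, h4]; exact hcop) ?_ ?_)
  · have hndvd : ∀ {r s : ℕ}, r.Prime → r.Coprime s → ¬ r ^ 2 * s ∣ r * s ^ 2 := by
      intro r s hr hrs hd
      have hr2 : r ^ 2 ∣ r ^ 1 :=
        (hrs.pow 2 2).dvd_of_dvd_mul_right (by simpa using (dvd_mul_right _ _).trans hd)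
      exact absurd ((Nat.pow_dvd_pow_iff_le_right hr.one_lt).mp hr2) (by norm_num)
    rintro (h | h) <;> have hd := orderOf_dvd_of_mem_zpowers h <;> rw [h1, h2] at hd
    · exact hndvd hp hcop hd
    · exact hndvd hq hcop.symm (by simpa only [mul_comm] using hd)
  · exact h3.trans_ne hp.ne_one
  · exact h4.trans_ne hq.ne_one

end Group

section Finite

variable {G : Type*} [Group G] [Finite G]

theorem mem_zpowers_of_mem_zpowers_of_orderOf_le {y z : G} (h : z ∈ zpowers y)
    (hle : orderOf y ≤ orderOf z) : y ∈ zpowers z := by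
  have heq : zpowers z = zpowers y :=
    eq_of_le_of_card_ge (zpowers_le.mpr h) (by rwa [Nat.card_zpowers, Nat.card_zpowers])
  exact heq ▸ mem_zpowers y

/-- A cyclic group has only one subgroup of prime order `p`. -/
theorem pow_orderOf_div_mem_zpowers {p : ℕ} (hp : p.Prime) {a w : G} (hw : w ∈ zpowers a)
    (hwp : orderOf w = p) : a ^ (orderOf a / p) ∈ zpowers w := by
  have hpa : p ∣ orderOf a := hwp ▸ orderOf_dvd_of_mem_zpowers hw
  have hu : orderOf (a ^ (orderOf a / p)) = p := orderOf_pow_orderOf_div (orderOf_pos a).ne' hpa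
  refine mem_zpowers_of_mem_zpowers_of_orderOf_le ?_ (hu.trans hwp.symm).le
  obtain ⟨k, rfl⟩ := mem_zpowers_iff.mp hw
  have hdvd : ((orderOf a / p : ℕ) : ℤ) * p ∣ k * p := by
    rw [← Nat.cast_mul, Nat.div_mul_cancel hpa, orderOf_dvd_iff_zpow_eq_one, zpow_mul,
      zpow_natCast, ← hwp, pow_orderOf_eq_one]
  obtain ⟨j, hj⟩ := Int.dvd_of_mul_dvd_mul_right (Int.natCast_ne_zero.mpr hp.ne_zero) hdvd
  exact ⟨j, by simp only [← zpow_natCast, ← zpow_mul, hj]⟩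

/-- `powComparable_of_mem_zpowers_of_commute` applied to `w * a` and `a`, which share the power
`a ^ p ^ (m - 1)`. -/
theorem mem_zpowers_of_commute_of_orderOf_eq_prime (h4 : pgC4Free G) {p m : ℕ} (hp : p.Prime)
    (hm : 2 ≤ m) {w a b : G} (hw : orderOf w = p) (ha : orderOf a = p ^ m)
    (hb : p.Coprime (orderOf b)) (hb1 : orderOf b ≠ 1) (hwa : Commute w a) (hwb : Commute w b)
    (hab : Commute a b) : w ∈ zpowers a := by
  have hw_pow : ∀ {n}, n ≠ 0 → w ^ p ^ n = 1 := fun hn =>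
    orderOf_dvd_iff_pow_eq_one.mp (hw ▸ dvd_pow_self p hn)
  have hwa_pow : (w * a) ^ p ^ (m - 1) = a ^ p ^ (m - 1) := by
    rw [hwa.mul_pow, hw_pow (by omega), one_mul]
  have hwa_dvd : orderOf (w * a) ∣ p ^ m := orderOf_dvd_of_pow_eq_one <| by
    rw [hwa.mul_pow, hw_pow (by omega), ← ha, pow_orderOf_eq_one, one_mul]
  have hu : orderOf (a ^ p ^ (m - 1)) = p := by
    rw [orderOf_pow_of_dvd (pow_ne_zero _ hp.ne_zero) (ha ▸ pow_dvd_pow p (m.sub_le 1)), ha,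
      Nat.pow_div (m.sub_le 1) hp.pos, show m - (m - 1) = 1 by omega, pow_one]
  have hcop : (p ^ m).Coprime (orderOf b) := hb.pow_left m
  have hub : ¬ PowComparable (a ^ p ^ (m - 1)) b :=
    not_powComparable_of_coprime (by rwa [hu]) (hu.trans_ne hp.ne_one) hb1
  have hwa_mem : w * a ∈ zpowers a := by
    rcases powComparable_of_mem_zpowers_of_commute h4 (hwb.mul_left hab) hab
      (hcop.coprime_dvd_left hwa_dvd) (ha ▸ hcop) (hwa_pow ▸ pow_mem (mem_zpowers _) _)
      (pow_mem (mem_zpowers a) _) hub with h | h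
    · exact h
    · exact mem_zpowers_of_mem_zpowers_of_orderOf_le h
        (ha ▸ Nat.le_of_dvd (pow_pos hp.pos m) hwa_dvd)
  simpa using mul_mem hwa_mem (inv_mem (mem_zpowers a))

end Finite

section Sylow

variable {G : Type*} [Group G] [Finite G]

theorem Subgroup.exists_eq_zpowers_of_powComparable (H : Subgroup G)
    (hH : ∀ g ∈ H, ∀ h ∈ H, PowComparable g h) : ∃ g, H = zpowers g := by
  obtain ⟨g, hgH, hmax⟩ :=
    Set.exists_max_image (H : Set G) orderOf (Set.toFinite _) ⟨1, H.one_mem⟩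
  refine ⟨g, le_antisymm (fun y hy => ?_) (zpowers_le.mpr hgH)⟩
  rcases hH y hy g hgH with h | h
  · exact h
  · exact mem_zpowers_of_mem_zpowers_of_orderOf_le h (hmax y hy)

variable {p : ℕ} [Fact p.Prime]
  (hcomp : ∀ g h : G, (∃ k, orderOf g = p ^ k) → (∃ l, orderOf h = p ^ l) → PowComparable g h)
include hcomp

theorem Sylow.exists_eq_zpowers_of_powComparable (P : Sylow p G) :
    ∃ g, (P : Subgroup G) = zpowers g := by
  refine (P : Subgroup G).exists_eq_zpowers_of_powComparable fun g hg h hh => hcomp g h ?_ ?_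
  · simpa using IsPGroup.iff_orderOf.mp P.isPGroup' ⟨g, hg⟩
  · simpa using IsPGroup.iff_orderOf.mp P.isPGroup' ⟨h, hh⟩

theorem Sylow.isCyclic_of_powComparable (P : Sylow p G) : IsCyclic P := by
  obtain ⟨g, hg⟩ := P.exists_eq_zpowers_of_powComparable hcomp
  rw [hg]
  infer_instance

theorem Sylow.mem_of_powComparable (P : Sylow p G) {y : G} (hy : ∃ k, orderOf y = p ^ k) :
    y ∈ (P : Subgroup G) := by
  obtain ⟨g, hg⟩ := P.exists_eq_zpowers_of_powComparable hcomp
  have hgP : g ∈ (P : Subgroup G) := hg ▸ mem_zpowers g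
  rcases hcomp y g hy (by simpa using IsPGroup.iff_orderOf.mp P.isPGroup' ⟨g, hgP⟩) with h | h
  · exact hg ▸ h
  · obtain ⟨k, hk⟩ := hy
    have hPy : zpowers y = P :=
      P.is_maximal' (IsPGroup.of_card (by rw [Nat.card_zpowers, hk])) (hg ▸ zpowers_le.mpr h)
    exact hPy ▸ mem_zpowers y

theorem Sylow.normal_of_powComparable (P : Sylow p G) : (P : Subgroup G).Normal := by
  refine ⟨fun y hy c => P.mem_of_powComparable hcomp ?_⟩
  rw [← MulAut.conj_apply, MulEquiv.orderOf_eq]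
  simpa using IsPGroup.iff_orderOf.mp P.isPGroup' ⟨y, hy⟩

end Sylow

theorem hughesSubgroup_eq_top {H : Type*} [Group H] [Finite H] [IsCyclic H] {p : ℕ}
    (hcard : Nat.card H ≠ p) : hughesSubgroup p H = ⊤ := by
  obtain ⟨g, hg⟩ := IsCyclic.exists_generator (α := H)
  have hgH : g ∈ hughesSubgroup p H :=
    subset_closure (show orderOf g ≠ p by rwa [orderOf_eq_card_of_forall_mem_zpowers hg])
  exact eq_top_iff.mpr fun y _ => zpowers_le.mpr hgH (hg y)

theorem Sylow.exponent_eq_of_forall_orderOf_ne_sq {G : Type*} [Group G] [Finite G] {q : ℕ}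
    [Fact q.Prime] (hG : ∀ y : G, orderOf y ≠ q ^ 2) (hq : q ∣ Nat.card G) (Q : Sylow q G) :
    Monoid.exponent Q = q := by
  have : Nontrivial Q := (Q : Subgroup G).nontrivial_iff_ne_bot.mpr (Q.ne_bot_of_dvd_card hq)
  refine (Monoid.exponent_eq_prime_iff Fact.out).mpr fun y hy => ?_
  obtain ⟨k, hk⟩ := IsPGroup.iff_orderOf.mp Q.isPGroup' y
  have hk0 : k ≠ 0 := by rintro rfl; exact hy (orderOf_eq_one_iff.mp (by simpa using hk))
  have hk1 : k < 2 := by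
    by_contra! hk2
    refine hG (y ^ (orderOf y / q ^ 2) : Q) ?_
    rw [orderOf_coe, orderOf_pow_orderOf_div (orderOf_pos y).ne' (hk ▸ pow_dvd_pow q hk2)]
  rw [hk, show k = 1 by omega, pow_one]

section Central

variable {K : Type*} [Group K] [Finite K] {p q m : ℕ} {x : K} (h4 : pgC4Free K) (hp : p.Prime)
  (hq : q.Prime) (hpq : p ≠ q) (hm : 2 ≤ m) (hx : orderOf x = p ^ m * q) (hxc : ∀ y, Commute x y)
include h4 hp hq hpq hm hx hxc

theorem pow_mem_zpowers_of_orderOf_eq_prime_pow {g : K} {k : ℕ} (hk : k ≠ 0)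
    (hg : orderOf g = p ^ k) :
    (x ^ q) ^ (orderOf (x ^ q) / p) ∈ zpowers g := by
  have ha : orderOf (x ^ q) = p ^ m :=
    orderOf_pow_of_orderOf_eq_mul (hx.trans (mul_comm _ _)) hq.ne_zero
  have hb : orderOf (x ^ p ^ m) = q := orderOf_pow_of_orderOf_eq_mul hx (pow_ne_zero m hp.ne_zero)
  have hw : orderOf (g ^ (orderOf g / p)) = p :=
    orderOf_pow_orderOf_div (orderOf_pos g).ne' (hg ▸ dvd_pow_self p hk)
  have hwa : g ^ (orderOf g / p) ∈ zpowers (x ^ q) :=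
    mem_zpowers_of_commute_of_orderOf_eq_prime h4 hp hm hw ha
      (by rw [hb]; exact (Nat.coprime_primes hp hq).mpr hpq)
      (hb.trans_ne hq.ne_one) ((hxc _).pow_left q).symm ((hxc _).pow_left _).symm
      ((Commute.refl x).pow_pow _ _)
  exact zpowers_le.mpr (pow_mem (mem_zpowers g) _) (pow_orderOf_div_mem_zpowers hp hwa hw)

theorem powComparable_of_orderOf_eq_prime_pow (g h : K) (hg : ∃ k, orderOf g = p ^ k)
    (hh : ∃ l, orderOf h = p ^ l) :
    PowComparable g h := by
  obtain ⟨k, hk⟩ := hg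
  obtain ⟨l, hl⟩ := hh
  rcases eq_or_ne k 0 with rfl | hk0
  · rw [orderOf_eq_one_iff.mp (show orderOf g = 1 by simpa using hk)]
    exact Or.inl (one_mem _)
  rcases eq_or_ne l 0 with rfl | hl0
  · rw [orderOf_eq_one_iff.mp (show orderOf h = 1 by simpa using hl)]
    exact Or.inr (one_mem _)
  have hcop : p.Coprime q := (Nat.coprime_primes hp hq).mpr hpq
  have ha : orderOf (x ^ q) = p ^ m :=
    orderOf_pow_of_orderOf_eq_mul (hx.trans (mul_comm _ _)) hq.ne_zero
  have hu : orderOf ((x ^ q) ^ (orderOf (x ^ q) / p)) = p :=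
    orderOf_pow_orderOf_div (orderOf_pos _).ne' (ha ▸ dvd_pow_self p (by omega))
  have hb : orderOf (x ^ p ^ m) = q := orderOf_pow_of_orderOf_eq_mul hx (pow_ne_zero m hp.ne_zero)
  refine powComparable_of_mem_zpowers_of_commute h4 ((hxc g).pow_left _).symm
    ((hxc h).pow_left _).symm (by rw [hk, hb]; exact hcop.pow_left k)
    (by rw [hl, hb]; exact hcop.pow_left l)
    (pow_mem_zpowers_of_orderOf_eq_prime_pow h4 hp hq hpq hm hx hxc hk0 hk)
    (pow_mem_zpowers_of_orderOf_eq_prime_pow h4 hp hq hpq hm hx hxc hl0 hl)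
    (not_powComparable_of_coprime (by rw [hu, hb]; exact hcop)
      (hu.trans_ne hp.ne_one) (hb.trans_ne hq.ne_one))

theorem orderOf_ne_sq_of_forall_commute (y : K) : orderOf y ≠ q ^ 2 := by
  intro hy
  have ha : orderOf (x ^ (orderOf x / p ^ 2)) = p ^ 2 :=
    orderOf_pow_orderOf_div (orderOf_pos x).ne'
      (hx ▸ (pow_dvd_pow p hm).trans (dvd_mul_right _ _))
  have hcop : (orderOf (x ^ (orderOf x / p ^ 2))).Coprime (orderOf y) := by
    rw [ha, hy]; exact Nat.Coprime.pow 2 2 ((Nat.coprime_primes hp hq).mpr hpq)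
  refine h4 (pgHasInducedC4_of_orderOf_eq_sq_mul_sq hp hq hpq
    (c := x ^ (orderOf x / p ^ 2) * y) ?_)
  rw [((hxc y).pow_left _).orderOf_mul_eq_mul_orderOf_of_coprime hcop, ha, hy]

theorem hughesSubgroup_sylow_eq_top (P : Sylow p K) : hughesSubgroup p P = ⊤ := by
  have := Fact.mk hp
  have hcomp := powComparable_of_orderOf_eq_prime_pow h4 hp hq hpq hm hx hxc
  have := P.isCyclic_of_powComparable hcomp
  refine hughesSubgroup_eq_top fun hcard => ?_
  have ha : orderOf (x ^ q) = p ^ m :=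
    orderOf_pow_of_orderOf_eq_mul (hx.trans (mul_comm _ _)) hq.ne_zero
  have hdvd := Subgroup.orderOf_dvd_natCard _ (P.mem_of_powComparable hcomp ⟨m, ha⟩)
  rw [ha, hcard] at hdvd
  have := (Nat.pow_dvd_pow_iff_le_right hp.one_lt).mp (by simpa using hdvd : p ^ m ∣ p ^ 1)
  omega

end Central

theorem centralizer_structure_of_order_pmq {G : Type*} [Group G] [Finite G]
    (h : pgC4Free G) (p q m : ℕ) (hp : p.Prime) (hq : q.Prime) (hpq : p ≠ q)
    (hm : 1 < m) (x : G) (hx : orderOf x = p ^ m * q) :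
    (∀ P : Sylow p (Subgroup.centralizer ({x} : Set G)),
        IsCyclic ((hughesSubgroup p (P : Subgroup (Subgroup.centralizer ({x} : Set G)))).map
            (P : Subgroup (Subgroup.centralizer ({x} : Set G))).subtype) ∧
        ((hughesSubgroup p (P : Subgroup (Subgroup.centralizer ({x} : Set G)))).map
            (P : Subgroup (Subgroup.centralizer ({x} : Set G))).subtype).Normal) ∧
    (∀ Q : Sylow q (Subgroup.centralizer ({x} : Set G)),
        Monoid.exponent (Q : Subgroup (Subgroup.centralizer ({x} : Set G))) = q) := by
  set C := centralizer ({x} : Set G)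
  let x' : C := ⟨x, mem_centralizer_singleton_iff.mpr rfl⟩
  have hx' : orderOf x' = p ^ m * q := (orderOf_mk x _).trans hx
  have hxc : ∀ y, Commute x' y := fun y =>
    Subtype.ext (mem_centralizer_singleton_iff.mp y.2).symm
  have h4 : pgC4Free C := h.of_injective C.subtype C.subtype_injective
  refine ⟨fun P => ?_, fun Q => ?_⟩
  · have := Fact.mk hp
    have hcomp := powComparable_of_orderOf_eq_prime_pow h4 hp hq hpq hm hx' hxc
    rw [hughesSubgroup_sylow_eq_top h4 hp hq hpq hm hx' hxc, ← MonoidHom.range_eq_map,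
      range_subtype]
    exact ⟨P.isCyclic_of_powComparable hcomp, P.normal_of_powComparable hcomp⟩
  · have := Fact.mk hq
    refine Q.exponent_eq_of_forall_orderOf_ne_sq
      (orderOf_ne_sq_of_forall_commute h4 hp hq hpq hm hx' hxc) ?_
    exact orderOf_pow_of_orderOf_eq_mul hx' (pow_ne_zero m hp.ne_zero) ▸ orderOf_dvd_natCard _
end

section
/- Let G be a finite group whose power graph P(G) is C_4-free, and let x ∈ G be an element of order pq, where p, q are distinct primes. Then either |C_G(x)| = p^u q^v for some non-negative integers u, v, or |C_G(x)| = p^u q^v r^w for some prime r distinct from p and q and positive integers u, v, w. -/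
/-!
Write `n = |C_G(x)|`; it is divisible by `pq = o(x)`. Suppose two distinct primes `r, s`
outside `{p, q}` divide `n`. Cauchy's theorem gives `y, z ∈ C_G(x)` of orders `r, s`, and
`c, d ∈ ⟨x⟩` of orders `p, q`. Since `o(y)` is coprime to `o(x)`, `xy` has order `pqr` and
`⟨x⟩ ≤ ⟨xy⟩`; likewise `xz` has order `pqs` and `⟨x⟩ ≤ ⟨xz⟩`. So `xy - c - xz - d` is a
4-cycle of `P(G)` whose diagonals join elements of incomparable orders, i.e. an induced `C₄`.
Hence at most one prime besides `p` and `q` divides `n`, which is the claimed shape.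
-/

open Subgroup

section PowerGraph

variable {G : Type*} [Group G]

lemma mem_zpowers_mul_of_coprime {x y : G} (hxy : Commute x y)
    (hco : (orderOf x).Coprime (orderOf y)) : x ∈ zpowers (x * y) := by
  obtain ⟨m, hm⟩ := exists_pow_eq_self_of_coprime hco.symm
  have hpow : (x * y) ^ orderOf y = x ^ orderOf y := by
    rw [hxy.mul_pow, pow_orderOf_eq_one, mul_one]
  exact mem_zpowers_iff.mpr ⟨(orderOf y * m : ℕ), by rw [zpow_natCast, pow_mul, hpow, hm]⟩

lemma not_pgAdj_of_not_dvd {a b : G} (hab : ¬ orderOf a ∣ orderOf b)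
    (hba : ¬ orderOf b ∣ orderOf a) : ¬ pgAdj a b := by
  rintro ⟨-, h | h⟩
  exacts [hab (orderOf_dvd_of_mem_zpowers h), hba (orderOf_dvd_of_mem_zpowers h)]

lemma pgHasInducedC4_of_mem_zpowers {a b c d : G} (hca : c ∈ zpowers a) (hcb : c ∈ zpowers b)
    (hda : d ∈ zpowers a) (hdb : d ∈ zpowers b)
    (hab : ¬ orderOf a ∣ orderOf b) (hba : ¬ orderOf b ∣ orderOf a)
    (hcd : ¬ orderOf c ∣ orderOf d) (hdc : ¬ orderOf d ∣ orderOf c) :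
    pgHasInducedC4 G := by
  have ne_of_not_dvd {g h : G} (hgh : ¬ orderOf g ∣ orderOf h) : g ≠ h :=
    fun e => hgh (e ▸ dvd_rfl)
  have hac : a ≠ c := ne_of_not_dvd fun h => hab (h.trans (orderOf_dvd_of_mem_zpowers hcb))
  have had : a ≠ d := ne_of_not_dvd fun h => hab (h.trans (orderOf_dvd_of_mem_zpowers hdb))
  have hbc : b ≠ c := ne_of_not_dvd fun h => hba (h.trans (orderOf_dvd_of_mem_zpowers hca))
  have hbd : b ≠ d := ne_of_not_dvd fun h => hba (h.trans (orderOf_dvd_of_mem_zpowers hda))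
  exact ⟨a, c, b, d, hac, ne_of_not_dvd hab, had, hbc.symm, ne_of_not_dvd hcd, hbd,
    ⟨hac, Or.inr hca⟩, ⟨hbc.symm, Or.inl hcb⟩, ⟨hbd, Or.inr hdb⟩, ⟨had.symm, Or.inl hda⟩,
    not_pgAdj_of_not_dvd hab hba, not_pgAdj_of_not_dvd hcd hdc⟩

lemma pgHasInducedC4_of_commute {x y z c d : G} (hxy : Commute x y) (hxz : Commute x z)
    (hcoy : (orderOf x).Coprime (orderOf y)) (hcoz : (orderOf x).Coprime (orderOf z))
    (hyz : ¬ orderOf y ∣ orderOf z) (hzy : ¬ orderOf z ∣ orderOf y)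
    (hc : c ∈ zpowers x) (hd : d ∈ zpowers x)
    (hcd : ¬ orderOf c ∣ orderOf d) (hdc : ¬ orderOf d ∣ orderOf c) :
    pgHasInducedC4 G := by
  have hx : 0 < orderOf x := by
    refine Nat.pos_of_ne_zero fun hx => hyz ?_
    rw [hx, Nat.coprime_zero_left] at hcoy
    exact hcoy ▸ one_dvd _
  have hxxy : zpowers x ≤ zpowers (x * y) := zpowers_le.mpr (mem_zpowers_mul_of_coprime hxy hcoy)
  have hxxz : zpowers x ≤ zpowers (x * z) := zpowers_le.mpr (mem_zpowers_mul_of_coprime hxz hcoz)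
  refine pgHasInducedC4_of_mem_zpowers (hxxy hc) (hxxz hc) (hxxy hd) (hxxz hd) ?_ ?_ hcd hdc
  all_goals
    rwa [hxy.orderOf_mul_eq_mul_orderOf_of_coprime hcoy,
      hxz.orderOf_mul_eq_mul_orderOf_of_coprime hcoz, Nat.mul_dvd_mul_iff_left hx]

lemma Subgroup.exists_mem_orderOf_eq_of_prime_dvd_card [Finite G] (H : Subgroup G) {p : ℕ} (hp : p.Prime)
    (hpH : p ∣ Nat.card H) : ∃ g ∈ H, orderOf g = p := by
  have : Fact p.Prime := ⟨hp⟩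
  obtain ⟨g, hg⟩ := exists_prime_orderOf_dvd_card' p hpH
  exact ⟨g, g.2, (H.orderOf_coe g).trans hg⟩

lemma card_primeFactors_card_centralizer_sdiff_le_one [Finite G] (h : pgC4Free G) {x : G}
    {p q : ℕ} (hp : p.Prime) (hq : q.Prime) (hpq : p ≠ q) (hpx : p ∣ orderOf x)
    (hqx : q ∣ orderOf x) :
    ((Nat.card (centralizer {x})).primeFactors \ (orderOf x).primeFactors).card ≤ 1 := by
  refine Finset.card_le_one.mpr fun r hr s hs => ?_
  simp only [Finset.mem_sdiff, Nat.mem_primeFactors_of_ne_zero Nat.card_pos.ne',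
    Nat.mem_primeFactors_of_ne_zero (orderOf_pos x).ne', not_and] at hr hs
  obtain ⟨⟨hr, hrC⟩, hrx⟩ := hr
  obtain ⟨⟨hs, hsC⟩, hsx⟩ := hs
  by_contra hrs
  obtain ⟨y, hyC, hy⟩ := exists_mem_orderOf_eq_of_prime_dvd_card _ hr hrC
  obtain ⟨z, hzC, hz⟩ := exists_mem_orderOf_eq_of_prime_dvd_card _ hs hsC
  rw [← Nat.card_zpowers] at hpx hqx
  obtain ⟨c, hc, hcp⟩ := exists_mem_orderOf_eq_of_prime_dvd_card _ hp hpx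
  obtain ⟨d, hd, hdq⟩ := exists_mem_orderOf_eq_of_prime_dvd_card _ hq hqx
  refine h (pgHasInducedC4_of_commute (mem_centralizer_singleton_iff.mp hyC).symm
    (mem_centralizer_singleton_iff.mp hzC).symm ?_ ?_ ?_ ?_ hc hd ?_ ?_)
  · exact hy ▸ ((Nat.Prime.coprime_iff_not_dvd hr).mpr (hrx hr)).symm
  · exact hz ▸ ((Nat.Prime.coprime_iff_not_dvd hs).mpr (hsx hs)).symm
  · rwa [hy, hz, Nat.prime_dvd_prime_iff_eq hr hs]
  · rwa [hy, hz, Nat.prime_dvd_prime_iff_eq hs hr, eq_comm]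
  · rwa [hcp, hdq, Nat.prime_dvd_prime_iff_eq hp hq]
  · rwa [hcp, hdq, Nat.prime_dvd_prime_iff_eq hq hp, eq_comm]

end PowerGraph

lemma Nat.eq_prod_pow_factorization_of_primeFactors_subset {n : ℕ} {s : Finset ℕ} (hn : n ≠ 0)
    (hs : n.primeFactors ⊆ s) : n = ∏ p ∈ s, p ^ n.factorization p := by
  conv_lhs => rw [← Nat.prod_factorization_pow_eq_self hn]
  exact Finsupp.prod_of_support_subset _ (by rwa [Nat.support_factorization]) _
    (fun _ _ => pow_zero _)

lemma Nat.exists_eq_pow_mul_pow_or_eq_pow_mul_pow_mul_pow {n p q : ℕ} (hn : n ≠ 0)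
    (hp : p.Prime) (hq : q.Prime) (hpq : p ≠ q) (hpqn : p * q ∣ n)
    (hextra : (n.primeFactors \ {p, q}).card ≤ 1) :
    (∃ u v : ℕ, n = p ^ u * q ^ v) ∨
    (∃ r u v w : ℕ, r.Prime ∧ r ≠ p ∧ r ≠ q ∧ 0 < u ∧ 0 < v ∧ 0 < w ∧
      n = p ^ u * q ^ v * r ^ w) := by
  rcases Nat.le_one_iff_eq_zero_or_eq_one.mp hextra with hnone | hone
  · rw [Finset.card_eq_zero, Finset.sdiff_eq_empty_iff_subset] at hnone
    have hcard := Nat.eq_prod_pow_factorization_of_primeFactors_subset hn hnone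
    rw [Finset.prod_pair hpq] at hcard
    exact Or.inl ⟨_, _, hcard⟩
  · obtain ⟨r, hsingle⟩ := Finset.card_eq_one.mp hone
    have hrmem : r ∈ n.primeFactors \ {p, q} := hsingle ▸ Finset.mem_singleton_self r
    simp only [Finset.mem_sdiff, Nat.mem_primeFactors_of_ne_zero hn, Finset.mem_insert,
      Finset.mem_singleton, not_or] at hrmem
    obtain ⟨⟨hr, hrn⟩, hrp, hrq⟩ := hrmem
    have hsub : n.primeFactors ⊆ {p, q} ∪ {r} := sdiff_le_iff.mp hsingle.le
    have hcard := Nat.eq_prod_pow_factorization_of_primeFactors_subset hn hsub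
    rw [Finset.prod_union (by simp [hrp, hrq]), Finset.prod_pair hpq,
      Finset.prod_singleton] at hcard
    exact Or.inr ⟨r, _, _, _, hr, hrp, hrq,
      hp.factorization_pos_of_dvd hn ((dvd_mul_right p q).trans hpqn),
      hq.factorization_pos_of_dvd hn ((dvd_mul_left q p).trans hpqn),
      hr.factorization_pos_of_dvd hn hrn, hcard⟩

theorem centralizer_card_of_order_pq {G : Type*} [Group G] [Finite G]
    (h : pgC4Free G) (p q : ℕ) (hp : p.Prime) (hq : q.Prime) (hpq : p ≠ q)
    (x : G) (hx : orderOf x = p * q) :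
    (∃ u v : ℕ, Nat.card (Subgroup.centralizer ({x} : Set G)) = p ^ u * q ^ v) ∨
    (∃ r u v w : ℕ, r.Prime ∧ r ≠ p ∧ r ≠ q ∧ 0 < u ∧ 0 < v ∧ 0 < w ∧
      Nat.card (Subgroup.centralizer ({x} : Set G)) = p ^ u * q ^ v * r ^ w) := by
  have hextra := card_primeFactors_card_centralizer_sdiff_le_one h hp hq hpq
    (hx ▸ dvd_mul_right p q) (hx ▸ dvd_mul_left q p)
  rw [hx, Nat.primeFactors_mul hp.ne_zero hq.ne_zero, hp.primeFactors, hq.primeFactors]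
    at hextra
  exact Nat.exists_eq_pow_mul_pow_or_eq_pow_mul_pow_mul_pow Nat.card_pos.ne' hp hq hpq
    (hx ▸ orderOf_dvd_natCard _ (mem_centralizer_singleton_iff.mpr rfl)) hextra
end
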